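/- arXiv:1812.08269 — 2 statements merged into one kernel-verified Lean document; each statement's English description precedes it below -/
import Mathlib

section
/- For all k > 0 and every k-test vector Z, γ_k(α_k(γ_k(Z))) = γ_k(Z); moreover, for any k-test vector Z', if γ_k(Z) = γ_k(Z') then α_k(γ_k(Z)) ⊑ Z'. That is, α_k(γ_k(Z)) is the smallest k-test vector denoting the same language as Z. -/
/-!
`γ_k` is monotone for `⊑` and every language satisfies `L ⊆ γ_k(α_k(L))`, so both claims
reduce to `α_k(γ_k(Z)) ⊑ Z` for every `k`-test vector `Z`: the prefixes, suffixes and segments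
of the words of `γ_k(Z)` are allowed by `Z`. The only words of `γ_k(Z)` not controlled by
`I`, `F` and `T` are those of `C`, and for those of length `k - 1` the compatibility condition
`I ∩ F = C ∩ Σ^{k-1}` does the job.
-/

open Set
open scoped symmDiff

/-- A candidate `k`-test vector: a 4-tuple of sets of strings
(`I` prefixes, `F` suffixes, `T` segments, `C` short strings). -/
structure KTV (A : Type*) where
  I : Set (List A)
  F : Set (List A)
  T : Set (List A)
  C : Set (List A)

variable {A : Type*}

/-- `Z` is a genuine `k`-test vector. -/
def IsKTV (k : ℕ) (Z : KTV A) : Prop :=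
  Z.I ⊆ {w : List A | w.length = k - 1} ∧
  Z.F ⊆ {w : List A | w.length = k - 1} ∧
  Z.T ⊆ {w : List A | w.length = k} ∧
  Z.C ⊆ {w : List A | w.length < k} ∧
  Z.I ∩ Z.F = Z.C ∩ {w : List A | w.length = k - 1}

/-- The componentwise order `⊑` on `k`-test vectors. -/
def ktvLE (Z Z' : KTV A) : Prop :=
  Z.I ⊆ Z'.I ∧ Z.F ⊆ Z'.F ∧ Z.T ⊆ Z'.T ∧ Z.C ⊆ Z'.C

/-- The union `Z ⊔ Z'` of `k`-test vectors. -/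
def ktvUnion (Z Z' : KTV A) : KTV A :=
  ⟨Z.I ∪ Z'.I, Z.F ∪ Z'.F, Z.T ∪ Z'.T,
   Z.C ∪ Z'.C ∪ (Z.I ∩ Z'.F) ∪ (Z'.I ∩ Z.F)⟩

/-- The intersection `Z ⊓ Z'` of `k`-test vectors. -/
def ktvInter (Z Z' : KTV A) : KTV A :=
  ⟨Z.I ∩ Z'.I, Z.F ∩ Z'.F, Z.T ∩ Z'.T, Z.C ∩ Z'.C⟩

/-- The symmetric difference `Z △ Z'` of `k`-test vectors. -/
def ktvSymmDiff (Z Z' : KTV A) : KTV A :=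
  ⟨Z.I ∆ Z'.I, Z.F ∆ Z'.F, Z.T ∆ Z'.T,
   Z.C ∆ Z'.C ∆ (Z'.I ∩ Z.F) ∆ (Z.I ∩ Z'.F)⟩

/-- The least `k`-test vector `⊥ = ⟨∅,∅,∅,∅⟩`. -/
def ktvBot (A : Type*) : KTV A := ⟨∅, ∅, ∅, ∅⟩

/-- The greatest `k`-test vector `⊤ = ⟨Σ^{k-1}, Σ^{k-1}, Σ^k, Σ^{<k}⟩`. -/
def ktvTop (A : Type*) (k : ℕ) : KTV A :=
  ⟨{w | w.length = k - 1}, {w | w.length = k - 1},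
   {w | w.length = k}, {w | w.length < k}⟩

/-- `I_k(L)`: length-`(k-1)` prefixes of words of `L`. -/
def Ik (k : ℕ) (L : Set (List A)) : Set (List A) :=
  {u | u.length = k - 1 ∧ ∃ v, u ++ v ∈ L}

/-- `F_k(L)`: length-`(k-1)` suffixes of words of `L`. -/
def Fk (k : ℕ) (L : Set (List A)) : Set (List A) :=
  {w | w.length = k - 1 ∧ ∃ v, v ++ w ∈ L}

/-- `T_k(L)`: length-`k` substrings of words of `L`. -/
def Tk (k : ℕ) (L : Set (List A)) : Set (List A) :=
  {v | v.length = k ∧ ∃ u w, u ++ v ++ w ∈ L}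

/-- `C_k(L) = (L ∩ Σ^{<k-1}) ∪ (I_k(L) ∩ F_k(L))`. -/
def Ck (k : ℕ) (L : Set (List A)) : Set (List A) :=
  (L ∩ {w | w.length < k - 1}) ∪ (Ik k L ∩ Fk k L)

/-- `α_k(L) = ⟨I_k(L), F_k(L), T_k(L), C_k(L)⟩`. -/
def alphaK (k : ℕ) (L : Set (List A)) : KTV A :=
  ⟨Ik k L, Fk k L, Tk k L, Ck k L⟩

/-- `γ_k(Z) = C ∪ ((IΣ* ∩ Σ*F) \ (Σ*(Σ^k \ T)Σ*))`. -/
def gammaK (k : ℕ) (Z : KTV A) : Set (List A) :=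
  Z.C ∪ (({w | ∃ u ∈ Z.I, u <+: w} ∩ {w | ∃ u ∈ Z.F, u <:+ w}) \
    {w | ∃ v, v.length = k ∧ v ∉ Z.T ∧ v <:+: w})

/-- `L` is `k`-testable in the strict sense. -/
def IsKTSS (k : ℕ) (L : Set (List A)) : Prop :=
  ∃ Z : KTV A, IsKTV k Z ∧ gammaK k Z = L

/-- The cardinality `|Z| = |I| + |F| + |T| + |C ∩ Σ^{<k-1}|` of a `k`-test vector. -/
noncomputable def ktvCard (k : ℕ) (Z : KTV A) : ℕ :=
  Z.I.ncard + Z.F.ncard + Z.T.ncard + (Z.C ∩ {w : List A | w.length < k - 1}).ncard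

section

variable {k : ℕ}

lemma gammaK_mono {Z Z' : KTV A} (h : ktvLE Z Z') : gammaK k Z ⊆ gammaK k Z' := by
  obtain ⟨hI, hF, hT, hC⟩ := h
  rintro w (hw | ⟨⟨⟨p, hp, hpw⟩, ⟨s, hs, hsw⟩⟩, hsegs⟩)
  · exact Or.inl (hC hw)
  · refine Or.inr ⟨⟨⟨p, hI hp, hpw⟩, ⟨s, hF hs, hsw⟩⟩, ?_⟩
    rintro ⟨v, hv, hvT, hvw⟩
    exact hsegs ⟨v, hv, fun h => hvT (hT h), hvw⟩

lemma subset_gammaK_alphaK (L : Set (List A)) : L ⊆ gammaK k (alphaK k L) := by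
  intro w hw
  by_cases hshort : w.length < k - 1
  · exact Or.inl (Or.inl ⟨hw, hshort⟩)
  refine Or.inr ⟨⟨⟨w.take (k - 1),
      ⟨?_, w.drop (k - 1), by simpa using hw⟩, w.take_prefix _⟩,
    ⟨w.drop (w.length - (k - 1)),
      ⟨?_, w.take (w.length - (k - 1)), by simpa using hw⟩, w.drop_suffix _⟩⟩, ?_⟩
  · simp only [List.length_take]; omega
  · simp only [List.length_drop]; omega
  · rintro ⟨v, hv, hvT, s, t, rfl⟩
    exact hvT ⟨hv, s, t, hw⟩

namespace IsKTV

variable {Z : KTV A}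

lemma mem_I_of_mem_C (hZ : IsKTV k Z) {w : List A} (hw : w ∈ Z.C) (hlen : w.length = k - 1) :
    w ∈ Z.I :=
  (hZ.2.2.2.2.symm.subset ⟨hw, hlen⟩).1

lemma mem_F_of_mem_C (hZ : IsKTV k Z) {w : List A} (hw : w ∈ Z.C) (hlen : w.length = k - 1) :
    w ∈ Z.F :=
  (hZ.2.2.2.2.symm.subset ⟨hw, hlen⟩).2

lemma mem_C_of_mem_I_of_mem_F (hZ : IsKTV k Z) {w : List A} (hI : w ∈ Z.I) (hF : w ∈ Z.F) :
    w ∈ Z.C :=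
  (hZ.2.2.2.2.subset ⟨hI, hF⟩).1

lemma mem_I_of_append_mem_gammaK (hZ : IsKTV k Z) {u v : List A} (hu : u.length = k - 1)
    (h : u ++ v ∈ gammaK k Z) : u ∈ Z.I := by
  rcases h with hC | ⟨⟨⟨p, hp, hpuv⟩, -⟩, -⟩
  · have hlen : (u ++ v).length < k := hZ.2.2.2.1 hC
    simp only [List.length_append] at hlen
    obtain rfl : v = [] := List.eq_nil_of_length_eq_zero (by omega)
    exact hZ.mem_I_of_mem_C (by simpa using hC) hu
  · have hp_len : p.length = k - 1 := hZ.1 hp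
    obtain rfl : p = u :=
      (List.prefix_of_prefix_length_le hpuv (u.prefix_append v) (by omega)).eq_of_length (by omega)
    exact hp

lemma mem_F_of_append_mem_gammaK (hZ : IsKTV k Z) {v w : List A} (hw : w.length = k - 1)
    (h : v ++ w ∈ gammaK k Z) : w ∈ Z.F := by
  rcases h with hC | ⟨⟨-, ⟨s, hs, hsvw⟩⟩, -⟩
  · have hlen : (v ++ w).length < k := hZ.2.2.2.1 hC
    simp only [List.length_append] at hlen
    obtain rfl : v = [] := List.eq_nil_of_length_eq_zero (by omega)
    exact hZ.mem_F_of_mem_C (by simpa using hC) hw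
  · have hs_len : s.length = k - 1 := hZ.2.1 hs
    obtain rfl : s = w :=
      (List.suffix_of_suffix_length_le hsvw (v.suffix_append w) (by omega)).eq_of_length
        (by omega)
    exact hs

lemma Tk_gammaK_subset (hZ : IsKTV k Z) : Tk k (gammaK k Z) ⊆ Z.T := by
  rintro v ⟨hv, u, w, hC | ⟨-, hsegs⟩⟩
  · have hlen : (u ++ v ++ w).length < k := hZ.2.2.2.1 hC
    simp only [List.length_append] at hlen
    omega
  · by_contra hvT
    exact hsegs ⟨v, hv, hvT, u, w, rfl⟩

lemma Ck_gammaK_subset (hZ : IsKTV k Z) : Ck k (gammaK k Z) ⊆ Z.C := by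
  rintro w (⟨hC | ⟨⟨⟨p, hp, hpw⟩, -⟩, -⟩, hshort⟩ | ⟨⟨hw, v, hv⟩, -, v', hv'⟩)
  · exact hC
  · have hp_len : p.length = k - 1 := hZ.1 hp
    have hw_len : w.length < k - 1 := hshort
    have := hpw.length_le
    omega
  · exact hZ.mem_C_of_mem_I_of_mem_F (hZ.mem_I_of_append_mem_gammaK hw hv)
      (hZ.mem_F_of_append_mem_gammaK hw hv')

lemma alphaK_gammaK_le (hZ : IsKTV k Z) : ktvLE (alphaK k (gammaK k Z)) Z :=
  ⟨fun _ ⟨hu, _, hv⟩ => hZ.mem_I_of_append_mem_gammaK hu hv,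
    fun _ ⟨hw, _, hv⟩ => hZ.mem_F_of_append_mem_gammaK hw hv,
    hZ.Tk_gammaK_subset, hZ.Ck_gammaK_subset⟩

end IsKTV

end

theorem stmt9_general {A : Type*} (k : ℕ)
    (Z : KTV A) (hZ : IsKTV k Z) :
    gammaK k (alphaK k (gammaK k Z)) = gammaK k Z ∧
    ∀ Z' : KTV A, IsKTV k Z' → gammaK k Z = gammaK k Z' →
      ktvLE (alphaK k (gammaK k Z)) Z' := by
  refine ⟨(gammaK_mono hZ.alphaK_gammaK_le).antisymm (subset_gammaK_alphaK _), ?_⟩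
  intro Z' hZ' hsame
  rw [hsame]
  exact hZ'.alphaK_gammaK_le

/-- `α_k(γ_k(Z))` is the smallest `k`-test vector denoting the same
language as `Z`. -/
theorem stmt9 {A : Type*} [Fintype A] (k : ℕ) (hk : 0 < k)
    (Z : KTV A) (hZ : IsKTV k Z) :
    gammaK k (alphaK k (gammaK k Z)) = gammaK k Z ∧
    ∀ Z' : KTV A, IsKTV k Z' → gammaK k Z = gammaK k Z' →
      ktvLE (alphaK k (gammaK k Z)) Z' :=
  stmt9_general k Z hZ
end

section
/- The class of k-testable languages in the strict sense is not closed under union: over the alphabet Σ = {a, b}, the language {a^n : n ≥ 2} ∪ {b a^n b : n ≥ 0} (the union of the 3-TSS languages γ_3(⟨{aa},{aa},{aaa},{aa}⟩) and γ_3(⟨{ba,bb},{ab,bb},{baa,bab,aaa,aab},{bb}⟩)) is not a k-testable language for any value of k > 0. -/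
open Set
open scoped symmDiff

variable {A : Type*}

/-!
If `L = γ_k(Z)`, membership of a word of length at least `k - 1` only depends on its prefix and
suffix of length `k - 1` and on its factors of length `k`. Hence two words `u₁ v w₁` and
`u₂ v w₂` of `L` sharing a factor `v` of length `k - 1` force `u₁ v w₂ ∈ L`: every length-`k`
factor of `u₁ v w₂` lies inside `u₁ v` or inside `v w₂`. For the union in question take
`v = a^(k-1)`, the words `b a^(k-1) b` and `a a a^(k-1)`; the forced word `b a^(k-1)` is not in it.
-/

namespace List

variable {α : Type*}

theorem IsInfix.infix_or_infix_of_length_le {t p m s : List α} (h : t <:+: p ++ m ++ s)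
    (ht : t.length ≤ m.length + 1) : t <:+: p ++ m ∨ t <:+: m ++ s := by
  rcases infix_append_iff.mp h with h | h | ⟨t₁, t₂, rfl, h₁, h₂⟩
  · exact Or.inl h
  · exact Or.inr (infix_append_of_infix_right h)
  · by_cases hm : t₁.length ≤ m.length
    · have h₁m : t₁ <:+ m := suffix_of_suffix_length_le h₁ (suffix_append p m) hm
      exact Or.inr (infix_append_iff.mpr (Or.inr (Or.inr ⟨t₁, t₂, rfl, h₁m, h₂⟩)))
    · obtain rfl : t₂ = [] := eq_nil_of_length_eq_zero (by simp at ht; omega)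
      exact Or.inl (by simpa using h₁.isInfix)

theorem exists_triple_infix_cons_append_iff_mem {x z c : α} {m : List α} :
    (∃ p r, [p, c, r] <:+: x :: (m ++ [z])) ↔ c ∈ m := by
  constructor
  · rintro ⟨p, r, s, t, h⟩
    have hm : m = (x :: (m ++ [z])).tail.dropLast := by simp
    rw [hm, ← h]
    cases s <;> simp [dropLast_append_of_ne_nil]
  · intro hc
    obtain ⟨m₁, m₂, rfl⟩ := append_of_mem hc
    obtain ⟨l, p, hp⟩ := (eq_nil_or_concat (x :: m₁)).resolve_left (cons_ne_nil _ _)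
    obtain ⟨r, l', hr⟩ := exists_cons_of_ne_nil (by simp : m₂ ++ [z] ≠ [])
    refine ⟨p, r, l, l', ?_⟩
    have hsplit : x :: (m₁ ++ c :: m₂ ++ [z]) = x :: m₁ ++ c :: (m₂ ++ [z]) := by simp
    rw [hsplit, hp, hr]
    simp

theorem forall_mem_eq_of_forall_triple_infix {a : α} {r : List α}
    (h : ∀ v : List α, v.length = 3 → v <:+: a :: a :: r → v = [a, a, a]) :
    ∀ c ∈ r, c = a := by
  induction r with
  | nil => simp
  | cons c r ih =>
    obtain rfl : c = a := by simpa using h [a, a, c] rfl (prefix_append [a, a, c] r).isInfix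
    refine forall_mem_cons.mpr ⟨rfl, ih fun v hv hvr => h v hv ?_⟩
    exact hvr.trans (suffix_cons c _).isInfix

theorem exists_eq_cons_append_singleton {x z : α} {w : List α}
    (hx : [x] <+: w) (hz : [z] <:+ w) (hw : 2 ≤ w.length) : ∃ m, w = x :: (m ++ [z]) := by
  obtain ⟨t, rfl⟩ := hx
  obtain ⟨m, z', rfl⟩ := (eq_nil_or_concat t).resolve_left (by rintro rfl; simp at hw)
  obtain rfl : z = z' := by simpa using hz
  exact ⟨m, by simp⟩

end List

section

variable {A : Type*} {k : ℕ} {Z : KTV A} {w : List A}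

theorem mem_gammaK : w ∈ gammaK k Z ↔ w ∈ Z.C ∨
    ((∃ u ∈ Z.I, u <+: w) ∧ (∃ u ∈ Z.F, u <:+ w) ∧
      ∀ v : List A, v.length = k → v <:+: w → v ∈ Z.T) := by
  simp only [gammaK, mem_union, mem_sdiff, mem_inter_iff, mem_ofPred_eq, not_exists, not_and,
    not_imp_not, and_assoc]

theorem IsKTV.mem_gammaK_iff (hZ : IsKTV k Z) (hw : k - 1 ≤ w.length) :
    w ∈ gammaK k Z ↔ (∃ u ∈ Z.I, u <+: w) ∧ (∃ u ∈ Z.F, u <:+ w) ∧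
      ∀ v : List A, v.length = k → v <:+: w → v ∈ Z.T := by
  obtain ⟨-, -, -, hC, hIF⟩ := hZ
  refine mem_gammaK.trans ⟨?_, Or.inr⟩
  rintro (hwC | hw')
  · have hlt : w.length < k := hC hwC
    have hwIF : w ∈ Z.I ∩ Z.F := hIF ▸ ⟨hwC, by simp only [mem_ofPred_eq]; omega⟩
    exact ⟨⟨w, hwIF.1, List.prefix_refl w⟩, ⟨w, hwIF.2, List.suffix_refl w⟩,
      fun v hv hvw => absurd hvw.length_le (by omega)⟩
  · exact hw'

theorem IsKTSS.append_mem {L : Set (List A)} (hL : IsKTSS k L) {u₁ v w₁ u₂ w₂ : List A}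
    (hv : v.length = k - 1) (h₁ : u₁ ++ v ++ w₁ ∈ L) (h₂ : u₂ ++ v ++ w₂ ∈ L) :
    u₁ ++ v ++ w₂ ∈ L := by
  obtain ⟨Z, hZ, rfl⟩ := hL
  have hlen : ∀ u w, k - 1 ≤ (u ++ v ++ w).length := fun u w => by simp; omega
  obtain ⟨⟨p, hpI, hp⟩, -, hT₁⟩ := (hZ.mem_gammaK_iff (hlen _ _)).mp h₁
  obtain ⟨-, ⟨s, hsF, hs⟩, hT₂⟩ := (hZ.mem_gammaK_iff (hlen _ _)).mp h₂
  have hp_len : p.length = k - 1 := hZ.1 hpI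
  have hs_len : s.length = k - 1 := hZ.2.1 hsF
  refine (hZ.mem_gammaK_iff (hlen _ _)).mpr ⟨⟨p, hpI, ?_⟩, ⟨s, hsF, ?_⟩, fun t ht htw => ?_⟩
  · have hp' : p <+: u₁ ++ v :=
      List.prefix_of_prefix_length_le hp (List.prefix_append _ _) (by simp; omega)
    exact hp'.trans (List.prefix_append _ _)
  · rw [List.append_assoc] at hs ⊢
    have hs' : s <:+ v ++ w₂ :=
      List.suffix_of_suffix_length_le hs (List.suffix_append _ _) (by simp; omega)
    exact hs'.trans (List.suffix_append _ _)
  · rcases htw.infix_or_infix_of_length_le (by omega) with h | h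
    · exact hT₁ t ht (h.trans List.infix_append_left)
    · exact hT₂ t ht (h.trans (by rw [List.append_assoc]; exact List.infix_append_right))

theorem not_isKTSS_replicate_union {a b : A} (hab : a ≠ b) (k : ℕ) :
    ¬ IsKTSS k ({x | ∃ n, 2 ≤ n ∧ x = List.replicate n a} ∪
      {x | ∃ n, x = b :: (List.replicate n a ++ [b])}) := by
  intro hL
  rcases hL.append_mem (u₁ := [b]) (w₁ := [b]) (u₂ := [a, a]) (w₂ := [])
    (List.length_replicate (n := k - 1) (a := a)) (Or.inr ⟨k - 1, rfl⟩)
    (Or.inl ⟨2 + (k - 1), by omega, by simp [List.replicate_add]⟩) with ⟨n, -, h⟩ | ⟨n, h⟩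
  · have hb : b ∈ List.replicate n a := h ▸ by simp
    exact hab (List.eq_of_mem_replicate hb).symm
  · simp only [List.singleton_append, List.append_nil, List.cons.injEq, true_and] at h
    have hb : b ∈ List.replicate (k - 1) a := h ▸ by simp
    exact hab (List.eq_of_mem_replicate hb).symm

end

theorem gammaK_three_replicate {α : Type*} (a : α) :
    gammaK 3 (⟨{[a, a]}, {[a, a]}, {[a, a, a]}, {[a, a]}⟩ : KTV α) =
      {x | ∃ n, 2 ≤ n ∧ x = List.replicate n a} := by
  ext w
  simp only [mem_gammaK, mem_singleton_iff, exists_eq_left, mem_ofPred_eq]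
  constructor
  · rintro (rfl | ⟨⟨r, rfl⟩, -, hT⟩)
    · exact ⟨2, le_rfl, rfl⟩
    · have hr : r = List.replicate r.length a :=
        List.eq_replicate_iff.mpr ⟨rfl, List.forall_mem_eq_of_forall_triple_infix hT⟩
      exact ⟨2 + r.length, by omega, by rw [List.replicate_add, ← hr]; rfl⟩
  · rintro ⟨n, hn, rfl⟩
    refine Or.inr ⟨?_, ?_, fun v hv hvw => ?_⟩
    · exact List.prefix_replicate_iff.mpr ⟨hn, rfl⟩
    · exact List.suffix_replicate_iff.mpr ⟨hn, rfl⟩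
    · rw [(List.infix_replicate_iff.mp hvw).2, hv]
      rfl

theorem gammaK_three_cons_replicate_append :
    gammaK 3 (⟨{[true, false], [true, true]}, {[false, true], [true, true]},
      {[true, false, false], [true, false, true], [false, false, false], [false, false, true]},
      {[true, true]}⟩ : KTV Bool) = {x | ∃ n, x = true :: (List.replicate n false ++ [true])} := by
  have hT : ∀ p q r : Bool, [p, q, r] ∈ ({[true, false, false], [true, false, true],
      [false, false, false], [false, false, true]} : Set (List Bool)) ↔ q = false := by
    intro p q r
    cases p <;> cases q <;> cases r <;> simp
  ext w
  simp only [mem_gammaK, mem_singleton_iff, mem_ofPred_eq]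
  constructor
  · rintro (rfl | ⟨⟨u, hu, hpre⟩, ⟨u', hu', hsuf⟩, hwT⟩)
    · exact ⟨0, rfl⟩
    · have hx : [true] <+: w := by
        rcases hu with rfl | rfl <;> exact List.prefix_append [true] _ |>.trans hpre
      have hz : [true] <:+ w := by
        rcases hu' with rfl | rfl <;> exact List.suffix_append [_] [true] |>.trans hsuf
      have hw : 2 ≤ w.length := by
        rcases hu with rfl | rfl <;> simpa using hpre.length_le
      obtain ⟨m, rfl⟩ := List.exists_eq_cons_append_singleton hx hz hw
      refine ⟨m.length, ?_⟩
      rw [← List.eq_replicate_iff.mpr ⟨rfl, fun c hc => ?_⟩]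
      obtain ⟨p, r, hpcr⟩ := List.exists_triple_infix_cons_append_iff_mem.mpr hc
      exact (hT p c r).mp (hwT _ rfl hpcr)
  · rintro ⟨_ | n, rfl⟩
    · exact Or.inl rfl
    · refine Or.inr ⟨⟨[true, false], by simp, ?_⟩, ⟨[false, true], by simp, ?_⟩, fun v hv hvw => ?_⟩
      · exact ⟨List.replicate n false ++ [true], by simp [List.replicate_succ]⟩
      · exact ⟨true :: List.replicate n false, by simp [List.replicate_succ']⟩
      · obtain ⟨p, q, r, rfl⟩ := List.length_eq_three.mp hv
        exact (hT p q r).mpr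
          (List.eq_of_mem_replicate (List.exists_triple_infix_cons_append_iff_mem.mp ⟨p, r, hvw⟩))

theorem isKTV_three_replicate {α : Type*} (a : α) :
    IsKTV 3 (⟨{[a, a]}, {[a, a]}, {[a, a, a]}, {[a, a]}⟩ : KTV α) := by
  refine ⟨by simp, by simp, by simp, by simp, ?_⟩
  ext w
  simp

theorem isKTV_three_cons_replicate_append :
    IsKTV 3 (⟨{[true, false], [true, true]}, {[false, true], [true, true]},
      {[true, false, false], [true, false, true], [false, false, false], [false, false, true]},
      {[true, true]}⟩ : KTV Bool) := by
  refine ⟨by simp [insert_subset_iff], by simp [insert_subset_iff], by simp [insert_subset_iff],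
    by simp, ?_⟩
  ext w
  simp only [mem_inter_iff, mem_insert_iff, mem_singleton_iff, mem_ofPred_eq]
  constructor
  · rintro ⟨rfl | rfl, h | h⟩ <;> simp_all
  · rintro ⟨rfl, -⟩
    simp

/-- `k`-TSS languages are not closed under union:
`{a^n : n ≥ 2} ∪ {b a^n b : n ≥ 0}`, the union of two 3-TSS languages,
is not `k`-testable for any `k > 0`. -/
theorem stmt13 :
    let a : Bool := false
    let b : Bool := true
    let Z : KTV Bool := ⟨{[a,a]}, {[a,a]}, {[a,a,a]}, {[a,a]}⟩
    let Z' : KTV Bool := ⟨{[b,a],[b,b]}, {[a,b],[b,b]},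
      {[b,a,a],[b,a,b],[a,a,a],[a,a,b]}, {[b,b]}⟩
    let L : Set (List Bool) :=
      {x | ∃ n, 2 ≤ n ∧ x = List.replicate n a} ∪
      {x | ∃ n, x = b :: (List.replicate n a ++ [b])}
    IsKTV 3 Z ∧ IsKTV 3 Z' ∧ gammaK 3 Z ∪ gammaK 3 Z' = L ∧
      ∀ k, 0 < k → ¬ IsKTSS k L := by
  intro a b Z Z' L
  refine ⟨isKTV_three_replicate a, isKTV_three_cons_replicate_append, ?_,
    fun k _ => not_isKTSS_replicate_union Bool.false_ne_true k⟩
  rw [gammaK_three_replicate, gammaK_three_cons_replicate_append]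
end
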